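/- The permutation ω_I ∈ S_n defined for I = {i_1 < ... < i_r} by listing the complement of I in increasing order followed by I in decreasing order factors as the product of cycles ω_I = ζ_{i_r} ⋯ ζ_{i_2} ζ_{i_1}, where ζ_{i_k} is the cycle moving the element at position i_k − k + 1 to position n − k + 1 (cyclically shifting positions i_k − k + 1 through n − k + 1). -/

import Mathlib

open Equiv

/-- The cycle of the interval of positions [a, b] (0-indexed) in Fin n sending
t ↦ t+1 for a ≤ t < b and b ↦ a (identity when a ≤ b < n fails).  It is the
product of adjacent transpositions (a a+1)(a+1 a+2)⋯(b−1 b), with (b−1 b)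
applied first. -/
def zeta (n a b : ℕ) : Equiv.Perm (Fin n) :=
  if h : a ≤ b ∧ b < n then
    (List.ofFn (fun t : Fin (b - a) =>
      Equiv.swap (⟨a + t, by omega⟩ : Fin n) ⟨a + t + 1, by omega⟩)).prod
  else 1

/-- ω_I : the permutation sending position k to the k-th entry of the word
"complement of I ascending, then I descending". -/
noncomputable def omegaI {n : ℕ} (I : Finset (Fin n)) : Equiv.Perm (Fin n) :=
  ((finCongr (by
      have h := Finset.card_le_univ I
      simp only [Finset.card_compl, Fintype.card_fin] at h ⊢
      omega : Iᶜ.card + I.card = n)).symm.trans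
    (finSumFinEquiv.symm)).trans <|
  (Equiv.sumCongr (Equiv.refl (Fin Iᶜ.card)) (Fin.revPerm)).trans <|
  (Equiv.sumCongr (Iᶜ.orderIsoOfFin rfl).toEquiv (I.orderIsoOfFin rfl).toEquiv).trans <|
  (Equiv.sumComm _ _).trans <|
  (Equiv.sumCongr (Equiv.refl _)
    (Equiv.subtypeEquivRight (fun x => Finset.mem_compl))).trans <|
  Equiv.sumCompl (· ∈ I)

/-!
Read a permutation `σ` of `Fin n` as its word `List.ofFn σ`; then `σ * zeta n a b` has the word
of `σ` with the letter at position `a` moved to position `b`. The word of `omegaI I` is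
`Iᶜ.sort ++ I.sort.reverse`. If `M` exceeds every element of `s`, then in the word of `omegaI s`
the letter `M` sits at position `M - #s` of the ascending block `sᶜ.sort`, and moving it to the
end of that block, position `n - 1 - #s`, produces the word of `omegaI (insert M s)`. Adding the
elements of `I` in increasing order multiplies in the cycles one by one.
-/

theorem List.ofFn_comp_rev {α : Type*} {m : ℕ} (f : Fin m → α) :
    List.ofFn (fun i => f i.rev) = (List.ofFn f).reverse := by
  refine List.ext_getElem (by simp) fun k h₁ _ => ?_
  rw [List.length_ofFn] at h₁
  simp only [List.getElem_ofFn, List.getElem_reverse, List.length_ofFn, Fin.rev]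
  congr 2
  omega

theorem List.ofFn_comp_swap_succ {α : Type*} {n : ℕ} {f : Fin n → α} {A C : List α}
    {x y : α} (h : List.ofFn f = A ++ x :: y :: C) (hA : A.length + 1 < n) :
    List.ofFn (f ∘ Equiv.swap ⟨A.length, by omega⟩ ⟨A.length + 1, hA⟩) =
      A ++ y :: x :: C := by
  have hlen : n = A.length + C.length + 2 := by
    simpa [Nat.add_assoc] using congrArg List.length h
  have hf (i : Fin n) : f i = (A ++ x :: y :: C)[i.val]'(by simp; omega) :=
    (List.getElem_ofFn (h := by simp)).symm.trans (List.getElem_of_eq h _)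
  refine List.ext_getElem (by simp; omega) fun k _ _ => ?_
  simp only [List.getElem_ofFn, Function.comp_apply, hf]
  by_cases hk : k = A.length
  · subst hk; simp
  by_cases hk' : k = A.length + 1
  · subst hk'; simp
  rw [swap_apply_of_ne_of_ne (by simpa [Fin.ext_iff]) (by simpa [Fin.ext_iff])]
  rcases Nat.lt_or_gt_of_ne hk with hlt | hgt
  · simp [List.getElem_append_left hlt]
  · obtain ⟨m, rfl⟩ : ∃ m, k = A.length + (m + 2) := ⟨k - A.length - 2, by omega⟩
    simp [List.getElem_append_right]

theorem List.finRange_eq_append_cons {n : ℕ} (M : Fin n) :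
    ∃ L₁ L₂, List.finRange n = L₁ ++ M :: L₂ ∧ L₁.length = M ∧
      (∀ x ∈ L₁, x < M) ∧ ∀ x ∈ L₂, M < x := by
  obtain ⟨L₁, L₂, hF⟩ := List.append_of_mem (List.mem_finRange M)
  have hsorted := List.pairwise_lt_finRange n
  rw [hF, List.pairwise_append, List.pairwise_cons] at hsorted
  obtain ⟨-, ⟨hL₂, -⟩, hL₁⟩ := hsorted
  refine ⟨L₁, L₂, hF, ?_, fun x hx => hL₁ x hx M List.mem_cons_self, hL₂⟩
  have hM := List.getElem_of_eq hF (i := L₁.length) (by simp [hF])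
  simpa [Fin.ext_iff] using hM

theorem Finset.sort_eq_filter_finRange {n : ℕ} (s : Finset (Fin n)) :
    s.sort = (List.finRange n).filter (· ∈ s) := by
  have hnodup : ((List.finRange n).filter (· ∈ s)).Nodup := (List.nodup_finRange n).filter _
  have hs : ((List.finRange n).filter (· ∈ s)).toFinset = s := by ext; simp
  conv_lhs => rw [← hs]
  exact (List.toFinset_sort _ hnodup).mpr ((List.pairwise_lt_finRange n).filter _ |>.imp le_of_lt)

theorem Finset.sort_insert_of_forall_lt {α : Type*} [LinearOrder α] {s : Finset α} {M : α}
    (hM : ∀ x ∈ s, x < M) : (insert M s).sort = s.sort ++ [M] := by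
  have hMs : M ∉ s := fun h => lt_irrefl M (hM M h)
  have hnodup : (s.sort ++ [M]).Nodup := by simpa [List.nodup_append] using hMs
  have hpair : (s.sort ++ [M]).Pairwise (· ≤ ·) := by
    simpa [List.pairwise_append] using fun x hx => (hM x hx).le
  have hs : (s.sort ++ [M]).toFinset = insert M s := by ext; simp
  rw [← hs]
  exact (List.toFinset_sort _ hnodup).mpr hpair

theorem Finset.sort_compl_of_forall_lt {n : ℕ} {s : Finset (Fin n)} {M : Fin n}
    (hM : ∀ x ∈ s, x < M) :
    ∃ A B, sᶜ.sort = A ++ M :: B ∧ (insert M s)ᶜ.sort = A ++ B ∧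
      A.length = M - s.card ∧ A.length + B.length = n - 1 - s.card := by
  have hMs : M ∉ s := fun h => lt_irrefl M (hM M h)
  obtain ⟨L₁, L₂, hF, hlen₁, hL₁, hL₂⟩ := List.finRange_eq_append_cons M
  have hlen : L₁.length + L₂.length + 1 = n := by
    simpa [Nat.add_assoc] using (congrArg List.length hF).symm
  have hL₂s : L₂.filter (· ∈ s) = [] :=
    List.filter_eq_nil_iff.mpr fun x hx => by simpa using fun h => (hM x h).not_gt (hL₂ x hx)
  have hL₂c : L₂.filter (· ∈ sᶜ) = L₂ :=
    List.filter_eq_self.mpr fun x hx => by simpa using fun h => (hM x h).not_gt (hL₂ x hx)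
  have hL₂Mc : L₂.filter (· ∈ (insert M s)ᶜ) = L₂ :=
    List.filter_eq_self.mpr fun x hx => by
      simpa [not_or] using ⟨(hL₂ x hx).ne', fun h => (hM x h).not_gt (hL₂ x hx)⟩
  have hsort : s.sort = L₁.filter (· ∈ s) := by
    rw [Finset.sort_eq_filter_finRange, hF, List.filter_append, List.filter_cons_of_neg (by simpa),
      hL₂s, List.append_nil]
  have hA : (L₁.filter (· ∈ sᶜ)).length + s.card = M := by
    rw [← Finset.length_sort (· ≤ ·), hsort, ← hlen₁]
    simpa [Nat.add_comm] using (List.length_eq_length_filter_add (· ∈ s) (l := L₁)).symm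
  refine ⟨L₁.filter (· ∈ sᶜ), L₂, ?_, ?_, by omega, by omega⟩
  · rw [Finset.sort_eq_filter_finRange, hF, List.filter_append,
      List.filter_cons_of_pos (by simpa), hL₂c]
  · rw [Finset.sort_eq_filter_finRange, hF, List.filter_append, List.filter_cons_of_neg (by simp),
      hL₂Mc]
    congr 1
    exact List.filter_congr fun x hx => by simp [(hL₁ x hx).ne]

theorem zeta_self (n a : ℕ) : zeta n a a = 1 := by
  unfold zeta
  split_ifs <;> simp

theorem zeta_eq_swap_mul {n a b : ℕ} (hab : a < b) (hb : b < n) :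
    zeta n a b = swap ⟨a, by omega⟩ ⟨a + 1, by omega⟩ * zeta n (a + 1) b := by
  rw [zeta, zeta, dif_pos ⟨hab.le, hb⟩, dif_pos ⟨hab, hb⟩,
    List.ofFn_congr (by omega : b - a = b - (a + 1) + 1), List.ofFn_succ, List.prod_cons]
  congr 3
  funext t
  congr 1 <;> ext <;> simp <;> omega

theorem ofFn_comp_zeta {α : Type*} {n : ℕ} {f : Fin n → α} {A B C : List α} {x : α}
    (h : List.ofFn f = A ++ x :: (B ++ C)) :
    List.ofFn (f ∘ zeta n A.length (A.length + B.length)) = A ++ B ++ x :: C := by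
  induction B generalizing A f with
  | nil => simpa [zeta_self] using h
  | cons y B ih =>
    have hlen : n = A.length + B.length + C.length + 2 := by
      simpa [Nat.add_assoc, Nat.add_comm, Nat.add_left_comm] using congrArg List.length h
    rw [List.length_cons, zeta_eq_swap_mul (by omega) (by omega), Perm.coe_mul,
      ← Function.comp_assoc]
    have := ih (A := A ++ [y])
      (f := f ∘ swap ⟨A.length, by omega⟩ ⟨A.length + 1, by omega⟩)
      (by rw [List.ofFn_comp_swap_succ h]; simp)
    simpa [Nat.add_assoc, Nat.add_comm 1] using this

theorem ofFn_omegaI {n : ℕ} (I : Finset (Fin n)) :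
    List.ofFn (omegaI I) = Iᶜ.sort ++ I.sort.reverse := by
  have h : n = Iᶜ.card + I.card := by
    have := Finset.card_le_univ I
    simp only [Finset.card_compl, Fintype.card_fin] at this ⊢
    omega
  -- `simp` turns a cast of `Fin.castAdd` into `Fin.castLE`, out of reach of the `castAdd` lemma.
  have hinl (i : Fin Iᶜ.card) :
      finSumFinEquiv.symm (Fin.castLE (by omega) i : Fin (Iᶜ.card + I.card)) = Sum.inl i :=
    finSumFinEquiv_symm_apply_castAdd i
  rw [List.ofFn_congr h, List.ofFn_add]
  congr 1
  · simp [omegaI, hinl, List.ofFn_eq_map]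
  · simp [omegaI, List.ofFn_comp_rev (I.orderEmbOfFin rfl), List.ofFn_eq_map]

theorem omegaI_empty {n : ℕ} : omegaI (∅ : Finset (Fin n)) = 1 := by
  refine Equiv.coe_fn_injective (List.ofFn_injective ?_)
  beta_reduce
  rw [ofFn_omegaI, Finset.compl_empty, Finset.sort_eq_filter_finRange]
  simp [List.ofFn_id]

theorem omegaI_insert_of_forall_lt {n : ℕ} {s : Finset (Fin n)} {M : Fin n}
    (hM : ∀ x ∈ s, x < M) :
    omegaI (insert M s) = omegaI s * zeta n (M - s.card) (n - 1 - s.card) := by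
  obtain ⟨A, B, hcompl, hcompl', hA, hAB⟩ := Finset.sort_compl_of_forall_lt hM
  refine Equiv.coe_fn_injective (List.ofFn_injective ?_)
  beta_reduce
  rw [Perm.coe_mul, ← hA, ← hAB,
    ofFn_comp_zeta (x := M) (C := s.sort.reverse) (by rw [ofFn_omegaI, hcompl]; simp),
    ofFn_omegaI, hcompl', Finset.sort_insert_of_forall_lt hM]
  simp

theorem omegaI_eq_prod_mapIdx_sort {n : ℕ} (I : Finset (Fin n)) :
    omegaI I = (I.sort.mapIdx fun j (i : Fin n) => zeta n (i - j) (n - 1 - j)).prod := by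
  induction I using Finset.induction_on_max with
  | empty => simp [omegaI_empty]
  | insert M s hM ih =>
    rw [omegaI_insert_of_forall_lt hM, ih, Finset.sort_insert_of_forall_lt hM,
      List.mapIdx_append_one, List.prod_append, Finset.length_sort, List.prod_singleton]

theorem omegaI_cycle_factorization {n : ℕ} (I : Finset (Fin n)) :
    omegaI I =
      (List.ofFn (fun j : Fin I.card =>
        zeta n ((I.orderIsoOfFin rfl j : Fin n) - (j : ℕ)) (n - 1 - (j : ℕ)))).prod := by
  rw [omegaI_eq_prod_mapIdx_sort, List.mapIdx_eq_ofFn, List.ofFn_congr (Finset.length_sort _)]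
  rfl
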